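/- arXiv:math/0409540 — 7 statements merged into one kernel-verified Lean document; each statement's English description precedes it below -/
import Mathlib

section
/- Suppose (B_n) is a sequence of positive integers such that for every prime p and all positive integers n, k, if p divides B_n then ord_p(B_{nk}) = ord_p(B_n) + 2·ord_p(k), and such that any prime dividing both B_m and B_n divides B_{gcd(m,n)}. Then gcd(B_m, B_n) = B_{gcd(m,n)} for all m, n. -/
theorem stmt_4 (B : ℕ → ℕ)
    (hpos : ∀ n, 1 ≤ n → 0 < B n)
    (hord : ∀ p n k, p.Prime → 1 ≤ n → 1 ≤ k → p ∣ B n →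
      (B (n * k)).factorization p = (B n).factorization p + 2 * k.factorization p)
    (hgcd : ∀ p m n, p.Prime → 1 ≤ m → 1 ≤ n → p ∣ B m → p ∣ B n →
      p ∣ B (Nat.gcd m n)) :
    ∀ m n, 1 ≤ m → 1 ≤ n → Nat.gcd (B m) (B n) = B (Nat.gcd m n) := by
  intro m n hm hn
  set d := Nat.gcd m n with hd
  have hd1 : 1 ≤ d := Nat.gcd_pos_of_pos_left n hm
  obtain ⟨a, ha⟩ : d ∣ m := Nat.gcd_dvd_left m n
  obtain ⟨b, hb⟩ : d ∣ n := Nat.gcd_dvd_right m n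
  have ha1 : 1 ≤ a := by by_contra h; push_neg at h; interval_cases a <;> omega
  have hb1 : 1 ≤ b := by by_contra h; push_neg at h; interval_cases b <;> omega
  have hco : Nat.Coprime a b := by
    have := Nat.coprime_div_gcd_div_gcd (m := m) (n := n) hd1
    have haa : m / d = a := by rw [ha, Nat.mul_div_cancel_left a (by omega : 0 < d)]
    have hbb : n / d = b := by rw [hb, Nat.mul_div_cancel_left b (by omega : 0 < d)]
    rw [← haa, ← hbb]; exact this
  have hBm0 : B m ≠ 0 := (hpos m hm).ne'
  have hBn0 : B n ≠ 0 := (hpos n hn).ne'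
  have hBd0 : B d ≠ 0 := (hpos d hd1).ne'
  have key : ∀ u v, 1 ≤ u → 1 ≤ v → B u ∣ B (u * v) := by
    intro u v hu hv
    have huv : 1 ≤ u * v := Nat.one_le_iff_ne_zero.mpr (by positivity)
    rw [← Nat.factorization_le_iff_dvd (hpos u hu).ne' (hpos _ huv).ne', Finsupp.le_def]
    intro p
    by_cases hp : p.Prime
    · by_cases hpd : p ∣ B u
      · rw [hord p u v hp hu hv hpd]; omega
      · simp [Nat.factorization_eq_zero_of_not_dvd hpd]
    · simp [Nat.factorization_eq_zero_of_not_prime _ hp]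
  have h1 : B d ∣ Nat.gcd (B m) (B n) := by
    refine Nat.dvd_gcd ?_ ?_
    · rw [ha]; exact key d a hd1 ha1
    · rw [hb]; exact key d b hd1 hb1
  have h2 : Nat.gcd (B m) (B n) ∣ B d := by
    have hg0 : Nat.gcd (B m) (B n) ≠ 0 := Nat.gcd_ne_zero_left hBm0
    rw [← Nat.factorization_le_iff_dvd hg0 hBd0, Finsupp.le_def]
    intro p
    by_cases hp : p.Prime
    · by_cases hpg : p ∣ Nat.gcd (B m) (B n)
      · have hpm : p ∣ B m := hpg.trans (Nat.gcd_dvd_left _ _)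
        have hpn : p ∣ B n := hpg.trans (Nat.gcd_dvd_right _ _)
        have hpd : p ∣ B d := hgcd p m n hp hm hn hpm hpn
        have e1 := hord p d a hp hd1 ha1 hpd
        have e2 := hord p d b hp hd1 hb1 hpd
        rw [← ha] at e1
        rw [← hb] at e2
        have hab : a.factorization p = 0 ∨ b.factorization p = 0 := by
          by_contra h
          push_neg at h
          have h1' : p ∣ a := Nat.dvd_of_factorization_pos h.1
          have h2' : p ∣ b := Nat.dvd_of_factorization_pos h.2
          have : p ∣ Nat.gcd a b := Nat.dvd_gcd h1' h2'
          rw [Nat.Coprime] at hco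
          rw [hco] at this
          exact absurd (Nat.dvd_one.mp this) hp.ne_one
        rw [Nat.factorization_gcd hBm0 hBn0, Finsupp.inf_apply]
        rcases hab with h | h
        · exact inf_le_left.trans_eq (by omega)
        · exact inf_le_right.trans_eq (by omega)
      · rw [Nat.factorization_eq_zero_of_not_dvd hpg]; exact Nat.zero_le _
    · simp [Nat.factorization_eq_zero_of_not_prime _ hp]
  exact Nat.dvd_antisymm h2 h1
end

section
/- Suppose (B_n) is a sequence of positive integers such that for every prime p and all positive integers n, k with p | B_n, ord_p(B_{nk}) = ord_p(B_n) + 2·ord_p(k). If B_n has no primitive divisor (i.e., every prime dividing B_n divides B_m for some m < n with m | n, where the divisibility property holds), then B_n divides ∏_{p | n} p² · B_{n/p}, the product over distinct prime divisors p of n. -/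
theorem stmt_5 (B : ℕ → ℕ) (n : ℕ) (hn : 1 ≤ n)
    (hpos : ∀ m, 1 ≤ m → 0 < B m)
    (hdiv : ∀ m k, 1 ≤ m → m ∣ k → B m ∣ B k)
    (hord : ∀ q m k, q.Prime → 1 ≤ m → 1 ≤ k → q ∣ B m →
      (B (m * k)).factorization q = (B m).factorization q + 2 * k.factorization q)
    (hgcd : ∀ q m k, q.Prime → 1 ≤ m → 1 ≤ k → q ∣ B m → q ∣ B k →
      q ∣ B (Nat.gcd m k))
    (hnoprim : ∀ q, q.Prime → q ∣ B n → ∃ m, 1 ≤ m ∧ m < n ∧ m ∣ n ∧ q ∣ B m) :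
    B n ∣ ∏ p ∈ n.primeFactors, p ^ 2 * B (n / p) := by
  have hRpos : ∀ p ∈ n.primeFactors, p ^ 2 * B (n / p) ≠ 0 := by
    intro p hp
    have hpp := Nat.prime_of_mem_primeFactors hp
    have hpd := Nat.dvd_of_mem_primeFactors hp
    have h1 : 0 < n / p := Nat.div_pos (Nat.le_of_dvd hn hpd) hpp.pos
    exact Nat.mul_ne_zero (pow_ne_zero 2 hpp.pos.ne') (hpos _ h1).ne'
  have hRne : (∏ p ∈ n.primeFactors, p ^ 2 * B (n / p)) ≠ 0 :=
    Finset.prod_ne_zero_iff.mpr hRpos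
  rw [← Nat.factorization_le_iff_dvd (hpos n hn).ne' hRne]
  rw [Nat.factorization_prod hRpos]
  intro q
  by_cases hqp : q.Prime
  swap
  · simp [Nat.factorization_eq_zero_of_not_prime _ hqp]
  by_cases hqB : q ∣ B n
  swap
  · simp [Nat.factorization_eq_zero_of_not_dvd hqB]
  obtain ⟨m, hm1, hmn, hmd, hqm⟩ := hnoprim q hqp hqB
  have h2 : 2 ≤ n / m := by
    have := Nat.div_mul_cancel hmd
    rcases Nat.lt_or_ge (n / m) 2 with h | h
    · interval_cases h' : n / m <;> omega
    · exact h
  set p := (n / m).minFac with hpdef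
  have hpp : p.Prime := Nat.minFac_prime (by omega)
  have hpnm : p ∣ n / m := Nat.minFac_dvd _
  have hmpn : m * p ∣ n := by
    have := Nat.mul_dvd_mul_left m hpnm
    rwa [Nat.mul_div_cancel' hmd] at this
  have hpn : p ∣ n := (dvd_mul_left p m).trans hmpn
  have hmnp : m ∣ n / p := Nat.dvd_div_of_mul_dvd (by rwa [mul_comm] at hmpn)
  have hnp1 : 1 ≤ n / p := Nat.div_pos (Nat.le_of_dvd hn hpn) hpp.pos
  have hq' : q ∣ B (n / p) := hqm.trans (hdiv m (n / p) hm1 hmnp)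
  have key := hord q (n / p) p hqp hnp1 hpp.one_le hq'
  rw [Nat.div_mul_cancel hpn] at key
  have hpmem : p ∈ n.primeFactors :=
    Nat.mem_primeFactors.mpr ⟨hpp, hpn, by omega⟩
  have hterm : (B n).factorization q ≤ ((p ^ 2 * B (n / p)).factorization) q := by
    rw [Nat.factorization_mul (pow_ne_zero 2 hpp.pos.ne') (hpos _ hnp1).ne',
      Nat.factorization_pow]
    simp only [Finsupp.add_apply, Finsupp.smul_apply, smul_eq_mul]
    omega
  calc (B n).factorization q ≤ ((p ^ 2 * B (n / p)).factorization) q := hterm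
    _ ≤ (∑ r ∈ n.primeFactors, (r ^ 2 * B (n / r)).factorization) q := by
        rw [Finset.sum_apply']
        exact Finset.single_le_sum (f := fun r => ((r ^ 2 * B (n / r)).factorization) q)
          (fun r _ => Nat.zero_le _) hpmem
end

section
/- Let A, B, T be nonzero integers with gcd(A,B)=1 and T squarefree, and let p be an odd prime dividing both (A²+T²B²)² and 4AB(A²−T²B²). Then p divides A and p divides T, and ord_p of gcd((A²+T²B²)², 4AB(A²−T²B²)) is at most 4. -/
/-!
Write `X = A² + T²B²`, `Y = A² - T²B²`. If `p ∤ A` then also `p ∤ B` (else `p ∣ X - T²B² = A²`), so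
`p ∣ Y` and `p ∣ X + Y = 2A²`, absurd. Coprimality gives `p ∤ B`, so `p ∣ X - A² = T²B²` forces
`p ∣ T`, and squarefreeness makes `v_p(T²B²) = 2`. Either `p³ ∤ X`, and then `v_p(X²) ≤ 4`; or
`p³ ∣ X`, which forces `p² ∤ A` (else `p³ ∣ X - A²`) and `p³ ∤ Y` (else `p³ ∣ X - Y = 2T²B²`), so
`v_p(4AB·Y) ≤ 1 + 2`.
-/

theorem Prime.not_pow_dvd_mul {α : Type*} [CommMonoidWithZero α] [IsCancelMulZero α]
    {p a b : α} (hp : Prime p) {m n : ℕ} (ha : ¬ p ^ (m + 1) ∣ a) (hb : ¬ p ^ (n + 1) ∣ b) :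
    ¬ p ^ (m + n + 1) ∣ a * b := by
  simp only [pow_dvd_iff_le_emultiplicity, not_le, Nat.cast_add, Nat.cast_one,
    emultiplicity_mul hp] at ha hb ⊢
  rw [ENat.lt_add_one_iff (by simp)] at ha hb ⊢
  exact add_le_add ha hb

theorem Prime.not_pow_dvd_sq {α : Type*} [CommMonoidWithZero α] [IsCancelMulZero α]
    {p a : α} (hp : Prime p) {m : ℕ} (ha : ¬ p ^ (m + 1) ∣ a) : ¬ p ^ (m + m + 1) ∣ a ^ 2 :=
  sq a ▸ hp.not_pow_dvd_mul ha ha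

section

variable {R : Type*} [CommRing R] {p A B T : R}

theorem Prime.not_dvd_four (hp : Prime p) (h2 : ¬ p ∣ 2) : ¬ p ∣ 4 :=
  fun h4 ↦ h2 (hp.dvd_of_dvd_pow (n := 2) (by norm_num [h4]))

theorem Prime.dvd_of_dvd_sq_add_of_dvd_mul_sq_sub (hp : Prime p) (h2 : ¬ p ∣ 2)
    (hX : p ∣ A ^ 2 + T ^ 2 * B ^ 2) (hY : p ∣ 4 * A * B * (A ^ 2 - T ^ 2 * B ^ 2)) : p ∣ A := by
  by_contra hA
  have hB : ¬ p ∣ B := by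
    intro hB
    have hA2 := dvd_sub hX (dvd_mul_of_dvd_right (dvd_pow hB two_ne_zero) (T ^ 2))
    rw [add_sub_cancel_right] at hA2
    exact hA (hp.dvd_of_dvd_pow hA2)
  have h4 := hp.not_dvd_four h2
  have hY' : p ∣ A ^ 2 - T ^ 2 * B ^ 2 := by
    simpa [hp.dvd_mul, h4, hA, hB] using hY
  have h2A : p ∣ 2 * A ^ 2 := by
    simpa [two_mul] using dvd_add hX hY'
  simp only [hp.dvd_mul, h2, false_or] at h2A
  exact hA (hp.dvd_of_dvd_pow h2A)

theorem Prime.dvd_of_dvd_sq_add_sq_mul_sq (hp : Prime p) (hA : p ∣ A) (hB : ¬ p ∣ B)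
    (hX : p ∣ A ^ 2 + T ^ 2 * B ^ 2) : p ∣ T := by
  have hTB := dvd_sub hX (dvd_pow hA two_ne_zero)
  rw [add_sub_cancel_left, hp.dvd_mul] at hTB
  exact hTB.elim hp.dvd_of_dvd_pow fun h ↦ (hB (hp.dvd_of_dvd_pow h)).elim

theorem Prime.not_pow_five_dvd_sq_add_and_mul_sq_sub [IsDomain R] (hp : Prime p) (h2 : ¬ p ∣ 2)
    (hB : ¬ p ∣ B) (hT2 : ¬ p ^ 2 ∣ T) :
    ¬ (p ^ 5 ∣ (A ^ 2 + T ^ 2 * B ^ 2) ^ 2 ∧ p ^ 5 ∣ 4 * A * B * (A ^ 2 - T ^ 2 * B ^ 2)) := by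
  rintro ⟨hX5, hY5⟩
  have hC : ¬ p ^ 3 ∣ T ^ 2 * B ^ 2 :=
    hp.not_pow_dvd_mul (hp.not_pow_dvd_sq (m := 1) hT2) (hp.not_pow_dvd_sq (m := 0) (by simpa))
  have hX3 : p ^ 3 ∣ A ^ 2 + T ^ 2 * B ^ 2 :=
    not_not.mp fun h ↦ hp.not_pow_dvd_sq (m := 2) h hX5
  have hA2 : ¬ p ^ 2 ∣ A := by
    intro h
    have hA4 := pow_dvd_pow_of_dvd h 2
    rw [← pow_mul] at hA4
    have hA3 : p ^ 3 ∣ A ^ 2 := (pow_dvd_pow p (by norm_num)).trans hA4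
    exact hC (by simpa using dvd_sub hX3 hA3)
  have hY3 : ¬ p ^ 3 ∣ A ^ 2 - T ^ 2 * B ^ 2 := by
    intro hY3
    have h2C : p ^ 3 ∣ 2 * (T ^ 2 * B ^ 2) := by
      convert dvd_sub hX3 hY3 using 1
      ring
    exact hp.not_pow_dvd_mul (m := 0) (n := 2) (by simpa) hC h2C
  have h4B : ¬ p ^ (0 + 1) ∣ 4 * B := by
    simpa [hp.dvd_mul, hp.not_dvd_four h2] using hB
  have h4BAY := hp.not_pow_dvd_mul h4B (hp.not_pow_dvd_mul (m := 1) hA2 hY3)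
  refine h4BAY ((pow_dvd_pow p (by norm_num : 4 ≤ 5)).trans ?_)
  convert hY5 using 1
  ring

end

theorem stmt_9_general (A B T : ℤ)
    (hAB : IsCoprime A B) (hsq : Squarefree T)
    (p : ℕ) (hp : p.Prime) (hpodd : p ≠ 2)
    (hpdvd : (p : ℤ) ∣ ((A ^ 2 + T ^ 2 * B ^ 2) ^ 2).gcd (4 * A * B * (A ^ 2 - T ^ 2 * B ^ 2))) :
    (p : ℤ) ∣ A ∧ (p : ℤ) ∣ T ∧
      (((A ^ 2 + T ^ 2 * B ^ 2) ^ 2).gcd (4 * A * B * (A ^ 2 - T ^ 2 * B ^ 2))).factorization p ≤ 4 := by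
  have hpZ : Prime (p : ℤ) := Nat.prime_iff_prime_int.mp hp
  have h2 : ¬ (p : ℤ) ∣ 2 := by
    exact_mod_cast fun h ↦ hpodd ((Nat.prime_dvd_prime_iff_eq hp Nat.prime_two).mp h)
  have hX := hpZ.dvd_of_dvd_pow (hpdvd.trans (Int.gcd_dvd_left _ _))
  have hY := hpdvd.trans (Int.gcd_dvd_right _ _)
  have hpA := hpZ.dvd_of_dvd_sq_add_of_dvd_mul_sq_sub h2 hX hY
  have hpB : ¬ (p : ℤ) ∣ B := fun hB ↦ hpZ.not_isUnit (hAB.isUnit_of_dvd' hpA hB)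
  have hT2 : ¬ (p : ℤ) ^ 2 ∣ T := fun h ↦ hpZ.not_isUnit (hsq _ (sq (p : ℤ) ▸ h))
  refine ⟨hpA, hpZ.dvd_of_dvd_sq_add_sq_mul_sq hpA hpB hX, ?_⟩
  obtain hg | hg := eq_or_ne (((A ^ 2 + T ^ 2 * B ^ 2) ^ 2).gcd (4 * A * B * (A ^ 2 - T ^ 2 * B ^ 2))) 0
  · simp [hg]
  by_contra hle
  have h5 := (hp.pow_dvd_iff_le_factorization (k := 5) hg).mpr (by omega)
  have h5Z : (p : ℤ) ^ 5 ∣ _ := Int.natCast_dvd_natCast.mpr h5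
  exact hpZ.not_pow_five_dvd_sq_add_and_mul_sq_sub h2 hpB hT2
    ⟨h5Z.trans (Int.gcd_dvd_left _ _), h5Z.trans (Int.gcd_dvd_right _ _)⟩

theorem stmt_9 (A B T : ℤ) (hA : A ≠ 0) (hB : B ≠ 0) (hT : T ≠ 0)
    (hAB : IsCoprime A B) (hsq : Squarefree T)
    (p : ℕ) (hp : p.Prime) (hpodd : p ≠ 2)
    (hpdvd : (p : ℤ) ∣ ((A ^ 2 + T ^ 2 * B ^ 2) ^ 2).gcd (4 * A * B * (A ^ 2 - T ^ 2 * B ^ 2))) :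
    (p : ℤ) ∣ A ∧ (p : ℤ) ∣ T ∧
      (((A ^ 2 + T ^ 2 * B ^ 2) ^ 2).gcd (4 * A * B * (A ^ 2 - T ^ 2 * B ^ 2))).factorization p ≤ 4 :=
  stmt_9_general A B T hAB hsq p hp hpodd hpdvd
end

section
/- Let A, B, T be nonzero integers with gcd(A,B) = 1 and T squarefree. Then gcd((A²+T²B²)², 4AB(A²−T²B²)) ≤ 4T⁴. -/
/-!
Put `e = gcd(A, T)`, `A = a e`, `T = t e`. Both arguments of the gcd scale, by `e⁴` and `e³`
respectively, so the gcd divides `e⁴` times the same gcd formed from `a, B, t`, where now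
`c = t B` is coprime to `a`. Then `s = a² + c²` is coprime to `a c`, and a common divisor of `s²`
and `4 (a² - c²)` divides `4 s² - 4 (a² - c²)² = 16 (a c)²`, hence divides `16`. As `a` and `c`
are not both even, `8 ∤ s²`, so it divides `4`. Hence the gcd is at most `4 e⁴ ≤ 4 T⁴`.
-/

theorem IsCoprime.sq_add_sq_mul {R : Type*} [CommRing R] {a c : R} (h : IsCoprime a c) :
    IsCoprime (a ^ 2 + c ^ 2) (a * c) := by
  refine IsCoprime.mul_right ?_ ?_
  · have := (h.symm.pow_left (m := 2)).add_mul_left_left a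
    rwa [← sq, add_comm] at this
  · have := (h.pow_left (m := 2)).add_mul_left_left c
    rwa [← sq] at this

theorem Int.gcd_mul_mul_dvd_of_dvd {k m : ℤ} (hmk : m ∣ k) (x y : ℤ) :
    Int.gcd (k * x) (m * y) ∣ k.natAbs * Int.gcd x y := by
  rw [← Int.gcd_mul_left]
  exact Int.gcd_dvd_gcd_of_dvd_right _ (mul_dvd_mul_right hmk y)

theorem Int.not_eight_dvd_sq_add_sq_sq {a c : ℤ} (h : IsCoprime a c) :
    ¬ 8 ∣ (a ^ 2 + c ^ 2) ^ 2 := by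
  have of_odd : ∀ x y : ℤ, Odd x → ¬ 8 ∣ (x ^ 2 + y ^ 2) ^ 2 := by
    rintro x y ⟨k, rfl⟩ h8
    have h0 := (ZMod.intCast_zmod_eq_zero_iff_dvd _ 8).2 h8
    push_cast at h0
    revert h0
    generalize (k : ZMod 8) = k
    generalize (y : ZMod 8) = y
    revert k y
    decide
  rcases Int.even_or_odd a with ha | ha
  · rcases Int.even_or_odd c with hc | hc
    · exact absurd (h.isUnit_of_dvd' ha.two_dvd hc.two_dvd) (by decide)
    · rw [add_comm]
      exact of_odd c a hc
  · exact of_odd a c ha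

theorem Int.dvd_four_of_dvd_sq_add_sq_sq {a c g : ℤ} (hac : IsCoprime a c)
    (hs : g ∣ (a ^ 2 + c ^ 2) ^ 2) (hd : g ∣ 4 * (a ^ 2 - c ^ 2)) : g ∣ 4 := by
  have h16 : g ∣ 16 * (a * c) ^ 2 := by
    rw [show 16 * (a * c) ^ 2
      = 4 * (a ^ 2 + c ^ 2) ^ 2 - 4 * (a ^ 2 - c ^ 2) * (a ^ 2 - c ^ 2) by ring]
    exact dvd_sub (hs.mul_left 4) (hd.mul_right _)
  have h16 : g.natAbs ∣ 2 ^ 4 := Int.natAbs_dvd_natAbs.2 <|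
    (hac.sq_add_sq_mul.pow.of_isCoprime_of_dvd_left hs).dvd_of_dvd_mul_right h16
  obtain ⟨k, -, hk⟩ := (Nat.dvd_prime_pow Nat.prime_two).1 h16
  have hk2 : k ≤ 2 := by
    by_contra! hk3
    refine Int.not_eight_dvd_sq_add_sq_sq hac (dvd_trans ?_ hs)
    rw [← Int.natAbs_dvd_natAbs, hk]
    exact pow_dvd_pow 2 hk3
  rw [← Int.natAbs_dvd_natAbs, hk]
  exact pow_dvd_pow 2 hk2

theorem Int.gcd_dvd_four_of_isCoprime {a b t : ℤ} (hab : IsCoprime a b) (hat : IsCoprime a t) :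
    Int.gcd ((a ^ 2 + t ^ 2 * b ^ 2) ^ 2) (4 * a * b * (a ^ 2 - t ^ 2 * b ^ 2)) ∣ 4 := by
  have hac : IsCoprime a (t * b) := hat.mul_right hab
  rw [← mul_pow, ← Int.natCast_dvd_natCast]
  set g : ℤ := (Int.gcd _ _ : ℤ)
  have hs : g ∣ (a ^ 2 + (t * b) ^ 2) ^ 2 := Int.gcd_dvd_left _ _
  have hd : g ∣ 4 * a * b * (a ^ 2 - (t * b) ^ 2) := Int.gcd_dvd_right _ _
  have hgab : IsCoprime g (a * b) :=
    (hac.sq_add_sq_mul.of_isCoprime_of_dvd_right (mul_dvd_mul_left a (dvd_mul_left b t))).pow_left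
      |>.of_isCoprime_of_dvd_left hs
  rw [show 4 * a * b * (a ^ 2 - (t * b) ^ 2) = a * b * (4 * (a ^ 2 - (t * b) ^ 2)) by ring] at hd
  exact Int.dvd_four_of_dvd_sq_add_sq_sq hac hs (hgab.dvd_of_dvd_mul_left hd)

theorem stmt_10_general (A B T : ℤ) (hT : 1 ≤ T)
    (hAB : IsCoprime A B) :
    (((A ^ 2 + T ^ 2 * B ^ 2) ^ 2).gcd (4 * A * B * (A ^ 2 - T ^ 2 * B ^ 2)) : ℤ)
      ≤ 4 * T ^ 4 := by
  obtain ⟨e, a, t, he, hat, rfl, rfl⟩ :=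
    Int.exists_gcd_one' (Int.gcd_pos_of_ne_zero_right A (by omega : T ≠ 0))
  have ht : 1 ≤ t := by nlinarith
  have hscale := Int.gcd_mul_mul_dvd_of_dvd (pow_dvd_pow (e : ℤ) (by norm_num : 3 ≤ 4))
    ((a ^ 2 + t ^ 2 * B ^ 2) ^ 2) (4 * a * B * (a ^ 2 - t ^ 2 * B ^ 2))
  rw [show (e : ℤ) ^ 4 * (a ^ 2 + t ^ 2 * B ^ 2) ^ 2
      = ((a * e) ^ 2 + (t * e) ^ 2 * B ^ 2) ^ 2 by ring,
    show (e : ℤ) ^ 3 * (4 * a * B * (a ^ 2 - t ^ 2 * B ^ 2))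
      = 4 * (a * e) * B * ((a * e) ^ 2 - (t * e) ^ 2 * B ^ 2) by ring] at hscale
  have hdvd := hscale.trans (Nat.mul_dvd_mul_left _
    (Int.gcd_dvd_four_of_isCoprime hAB.of_mul_left_left (Int.isCoprime_iff_gcd_eq_one.2 hat)))
  rw [Int.natAbs_pow, Int.natAbs_natCast] at hdvd
  calc _ ≤ ((e ^ 4 * 4 : ℕ) : ℤ) := by exact_mod_cast Nat.le_of_dvd (by positivity) hdvd
    _ ≤ 4 * (t * e) ^ 4 := by
      push_cast
      rw [mul_pow, mul_comm]
      gcongr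
      exact le_mul_of_one_le_left (by positivity) (one_le_pow₀ ht)

theorem stmt_10 (A B T : ℤ) (hA : A ≠ 0) (hB : B ≠ 0) (hT : 1 ≤ T)
    (hAB : IsCoprime A B) (hsq : Squarefree T) :
    (((A ^ 2 + T ^ 2 * B ^ 2) ^ 2).gcd (4 * A * B * (A ^ 2 - T ^ 2 * B ^ 2)) : ℤ)
      ≤ 4 * T ^ 4 :=
  stmt_10_general A B T hT hAB
end

section
/- Suppose n is an even positive integer and h > 0, and suppose n²·h·(3/4 − ρ(n)) ≤ 4(0.621·η(n) + 1.216·ω(n) + 9.0776)·h, where ρ(n) = ∑_{p|n} 1/p², η(n) = 2∑_{p|n} log p, and ω(n) is the number of distinct prime divisors of n. Then n ≤ 10. -/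
/-!
Since `2⁻² = 1/4` and the odd squares telescope, `∑_{p ∣ n} p⁻² ≤ 1/2`, so the left-hand side
is at least `n² h / 4`. On the right, `∑_{p ∣ n} log p ≤ log n` and `ω(n) log 2 ≤ ∑_{p ∣ n} log p`,
so it is `O(h log n)`; with `log n ≤ n/16 + log 16 - 1` the inequality fails for every `n ≥ 18`.
The remaining even `n` in `(10, 18)`, namely `12, 14, 16`, are checked by hand.
-/

open Finset Real

lemma one_div_two_mul_add_three_sq_le {x : ℝ} (hx : 0 ≤ x) :
    1 / (2 * x + 3) ^ 2 ≤ 1 / (4 * (x + 1)) - 1 / (4 * (x + 1 + 1)) := by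
  rw [div_sub_div _ _ (by positivity) (by positivity),
    div_le_div_iff₀ (by positivity) (by positivity)]
  nlinarith

lemma sum_one_div_sq_le_quarter_of_odd {s : Finset ℕ} (hs : ∀ k ∈ s, Odd k ∧ 3 ≤ k) :
    ∑ k ∈ s, (1 : ℝ) / k ^ 2 ≤ 1 / 4 := by
  set N := s.sup id
  have hsub : s ⊆ (range N).image (fun j => 2 * j + 3) := by
    intro k hk
    obtain ⟨⟨j, rfl⟩, h3⟩ := hs k hk
    have hkN : 2 * j + 1 ≤ N := le_sup (f := id) hk
    exact mem_image.2 ⟨j - 1, mem_range.2 (by omega), by omega⟩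
  have hinj : Set.InjOn (fun j : ℕ => 2 * j + 3) (range N) := fun a _ b _ h => by
    simp only at h; omega
  calc ∑ k ∈ s, (1 : ℝ) / k ^ 2
      ≤ ∑ k ∈ (range N).image (fun j : ℕ => 2 * j + 3), (1 : ℝ) / (k : ℝ) ^ 2 :=
        sum_le_sum_of_subset_of_nonneg hsub fun _ _ _ => by positivity
    _ = ∑ j ∈ range N, (1 : ℝ) / (2 * j + 3) ^ 2 := by
        rw [sum_image hinj]; push_cast; rfl
    _ ≤ ∑ j ∈ range N, (1 / (4 * ((j : ℝ) + 1)) - 1 / (4 * (((j + 1 : ℕ) : ℝ) + 1))) := by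
        gcongr with j
        push_cast
        exact one_div_two_mul_add_three_sq_le j.cast_nonneg
    _ = 1 / 4 - 1 / (4 * (N + 1)) := by
        rw [sum_range_sub' (fun j : ℕ => 1 / (4 * ((j : ℝ) + 1)))]
        norm_num
    _ ≤ 1 / 4 := by
        have : (0 : ℝ) ≤ 1 / (4 * (N + 1)) := by positivity
        linarith

lemma sum_one_div_sq_le_half {s : Finset ℕ} (hs : ∀ p ∈ s, p.Prime) :
    ∑ p ∈ s, (1 : ℝ) / (p : ℝ) ^ 2 ≤ 1 / 2 := by
  rw [← sum_filter_add_sum_filter_not s (· = 2)]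
  have htwo : ∑ p ∈ s.filter (· = 2), (1 : ℝ) / (p : ℝ) ^ 2 ≤ 1 / 4 := by
    rw [filter_eq']
    split_ifs <;> norm_num
  have hodd : ∑ p ∈ s.filter (· ≠ 2), (1 : ℝ) / (p : ℝ) ^ 2 ≤ 1 / 4 := by
    refine sum_one_div_sq_le_quarter_of_odd fun p hp => ?_
    obtain ⟨hps, hp2⟩ := mem_filter.1 hp
    have hprime := hs p hps
    exact ⟨hprime.odd_of_ne_two hp2, by have := hprime.two_le; omega⟩
  linarith

lemma sum_log_primeFactors_le_log (n : ℕ) : ∑ p ∈ n.primeFactors, log p ≤ log n := by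
  rcases eq_or_ne n 0 with rfl | hn
  · simp
  rw [← log_prod fun p hp => by exact_mod_cast (Nat.prime_of_mem_primeFactors hp).ne_zero]
  refine log_le_log (prod_pos fun p hp => by exact_mod_cast (Nat.prime_of_mem_primeFactors hp).pos) ?_
  rw [← Nat.cast_prod]
  exact_mod_cast Nat.le_of_dvd (Nat.pos_of_ne_zero hn) (Nat.prod_primeFactors_dvd n)

lemma card_mul_log_two_le_sum_log {s : Finset ℕ} (hs : ∀ p ∈ s, 2 ≤ p) :
    s.card * log 2 ≤ ∑ p ∈ s, log p := by
  simpa using card_nsmul_le_sum s (fun p : ℕ => log p) (log 2) fun p hp =>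
    log_le_log two_pos (by exact_mod_cast hs p hp)

noncomputable def slack (n : ℕ) : ℝ :=
  (n : ℝ) ^ 2 * (3 / 4 - ∑ p ∈ n.primeFactors, (1 : ℝ) / (p : ℝ) ^ 2)
    - 4 * (0.621 * (2 * ∑ p ∈ n.primeFactors, log p) + 1.216 * (n.primeFactors.card : ℝ) + 9.0776)

lemma slack_pos_of_eighteen_le {n : ℕ} (hn : 18 ≤ n) : 0 < slack n := by
  have hx : (18 : ℝ) ≤ n := by exact_mod_cast hn
  have hx2 : 18 * (n : ℝ) ≤ (n : ℝ) ^ 2 := by nlinarith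
  have hS : (n : ℝ) ^ 2 * ∑ p ∈ n.primeFactors, (1 : ℝ) / (p : ℝ) ^ 2 ≤ (n : ℝ) ^ 2 * (1 / 2) :=
    mul_le_mul_of_nonneg_left
      (sum_one_div_sq_le_half fun _ hp => Nat.prime_of_mem_primeFactors hp) (sq_nonneg _)
  have hL := sum_log_primeFactors_le_log n
  have hlog2 := log_two_lt_d9
  have hω : 0.6931 * (n.primeFactors.card : ℝ) ≤ ∑ p ∈ n.primeFactors, log p := by
    have := card_mul_log_two_le_sum_log (s := n.primeFactors) fun _ hp =>
      (Nat.prime_of_mem_primeFactors hp).two_le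
    nlinarith [log_two_gt_d9, (Nat.cast_nonneg _ : (0 : ℝ) ≤ n.primeFactors.card)]
  have hlog : log n ≤ n / 16 + 4 * log 2 - 1 := by
    have := log_le_sub_one_of_pos (show (0 : ℝ) < n / 16 by positivity)
    rw [log_div (by positivity) (by norm_num), show (16 : ℝ) = 2 ^ 4 by norm_num, log_pow] at this
    push_cast at this
    linarith
  unfold slack
  linarith

lemma log_two_add_log_three_lt_two : log 2 + log 3 < 2 := by
  rw [← log_mul two_ne_zero three_ne_zero, log_lt_iff_lt_exp (by norm_num),
    show (2 : ℝ) = 1 + 1 by norm_num, exp_add]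
  nlinarith [exp_one_gt_d9]

lemma slack_twelve_pos : 0 < slack 12 := by
  have hpf : Nat.primeFactors 12 = {2, 3} := by
    simp [← Nat.toFinset_factors, Nat.primeFactorsList_ofNat]
  have hlog := log_two_add_log_three_lt_two
  simp only [slack, hpf]
  norm_num
  linarith

lemma slack_fourteen_pos : 0 < slack 14 := by
  have hpf : Nat.primeFactors 14 = {2, 7} := by
    simp [← Nat.toFinset_factors, Nat.primeFactorsList_ofNat]
  have hlog2 := log_le_sub_one_of_pos (show (0 : ℝ) < 2 by norm_num)
  have hlog7 := log_le_sub_one_of_pos (show (0 : ℝ) < 7 by norm_num)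
  simp only [slack, hpf]
  norm_num
  linarith

lemma slack_sixteen_pos : 0 < slack 16 := by
  have hpf : Nat.primeFactors 16 = {2} := by
    simp [← Nat.toFinset_factors, Nat.primeFactorsList_ofNat]
  have hlog2 := log_le_sub_one_of_pos (show (0 : ℝ) < 2 by norm_num)
  simp only [slack, hpf]
  norm_num
  linarith

lemma slack_pos_of_even {n : ℕ} (heven : Even n) (hn : 10 < n) : 0 < slack n := by
  obtain ⟨k, rfl⟩ := heven
  rcases le_or_gt 18 (k + k) with h | h
  · exact slack_pos_of_eighteen_le h
  · obtain rfl | rfl | rfl : k = 6 ∨ k = 7 ∨ k = 8 := by omega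
    exacts [slack_twelve_pos, slack_fourteen_pos, slack_sixteen_pos]

theorem stmt_13_general (n : ℕ) (heven : Even n) (h : ℝ) (hh : 0 < h)
    (hineq : (n : ℝ) ^ 2 * h * (3 / 4 - ∑ p ∈ n.primeFactors, (1 : ℝ) / (p : ℝ) ^ 2)
      ≤ 4 * (0.621 * (2 * ∑ p ∈ n.primeFactors, Real.log p)
        + 1.216 * (n.primeFactors.card : ℝ) + 9.0776) * h) :
    n ≤ 10 := by
  have hslack : slack n * h ≤ 0 := by unfold slack; linarith
  by_contra! hn
  exact (mul_pos (slack_pos_of_even heven hn) hh).not_ge hslack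

theorem stmt_13 (n : ℕ) (hn : 0 < n) (heven : Even n) (h : ℝ) (hh : 0 < h)
    (hineq : (n : ℝ) ^ 2 * h * (3 / 4 - ∑ p ∈ n.primeFactors, (1 : ℝ) / (p : ℝ) ^ 2)
      ≤ 4 * (0.621 * (2 * ∑ p ∈ n.primeFactors, Real.log p)
        + 1.216 * (n.primeFactors.card : ℝ) + 9.0776) * h) :
    n ≤ 10 :=
  stmt_13_general n heven h hh hineq
end

section
/- Suppose n is an odd positive integer satisfying n²(1 − ρ(n)) ≤ 4(0.621·η(n) + 1.216·ω(n) + 2.085), where ρ(n) = ∑_{p|n} 1/p², η(n) = 2∑_{p|n} log p, ω(n) the number of distinct prime factors. Then n ≤ 3. -/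
/-!
Every prime factor of an odd `n` is at least `3`, so `ρ(n) ≤ ∑_{2 < k ≤ n} 1/k² ≤ 1/2 - 1/n`,
`ω(n) ≤ ∑_{p ∣ n} log p ≤ log n` (as `log 3 > 1`), and `log n ≤ n / e`. For `n ≥ 9` the
left-hand side is then at least `n²/2 + n`, which exceeds the right-hand side, at most
`4 (2.458 n / e + 2.085)`. The remaining cases `n = 5, 7` are primes, where `ρ(n) = 1/n²` and
the same bound on `log n` suffices.
-/

open Real Finset

theorem Real.log_le_div_exp_one {x : ℝ} (hx : 0 < x) : log x ≤ x / exp 1 := by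
  have := log_le_sub_one_of_pos (div_pos hx (exp_pos 1))
  rw [log_div hx.ne' (exp_pos 1).ne', log_exp] at this
  linarith

namespace Nat

theorem three_le_of_mem_primeFactors {n p : ℕ} (hodd : Odd n) (hp : p ∈ n.primeFactors) :
    3 ≤ p := by
  have := (prime_of_mem_primeFactors hp).two_le
  have := Nat.odd_iff.1 (hodd.of_dvd_nat (dvd_of_mem_primeFactors hp))
  omega

theorem sum_primeFactors_inv_sq_le {n : ℕ} (hodd : Odd n) (hn : 2 ≤ n) :
    ∑ p ∈ n.primeFactors, ((p : ℝ) ^ 2)⁻¹ ≤ 2⁻¹ - (n : ℝ)⁻¹ :=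
  calc ∑ p ∈ n.primeFactors, ((p : ℝ) ^ 2)⁻¹ ≤ ∑ p ∈ Ioc 2 n, ((p : ℝ) ^ 2)⁻¹ :=
        sum_le_sum_of_subset_of_nonneg
          (fun p hp ↦ mem_Ioc.2 ⟨three_le_of_mem_primeFactors hodd hp,
            le_of_dvd (by omega) (dvd_of_mem_primeFactors hp)⟩)
          (fun _ _ _ ↦ by positivity)
    _ ≤ 2⁻¹ - (n : ℝ)⁻¹ := by exact_mod_cast sum_Ioc_inv_sq_le_sub two_ne_zero hn

theorem sum_log_primeFactors_le_log (n : ℕ) :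
    ∑ p ∈ n.primeFactors, Real.log p ≤ Real.log n := by
  rcases n.eq_zero_or_pos with rfl | hn
  · simp
  rw [← Real.log_prod (f := fun p : ℕ ↦ (p : ℝ))
    fun p hp ↦ by exact_mod_cast (prime_of_mem_primeFactors hp).ne_zero]
  have hdvd := prod_primeFactors_dvd n
  rw [← Nat.cast_prod]
  exact Real.log_le_log (by exact_mod_cast pos_of_dvd_of_pos hdvd hn)
    (by exact_mod_cast le_of_dvd hn hdvd)

theorem card_primeFactors_le_sum_log {n : ℕ} (hodd : Odd n) :
    (#n.primeFactors : ℝ) ≤ ∑ p ∈ n.primeFactors, Real.log p := by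
  simpa using card_nsmul_le_sum n.primeFactors (fun p : ℕ ↦ Real.log p) 1 fun p hp ↦ by
    have : (3 : ℝ) ≤ p := by exact_mod_cast three_le_of_mem_primeFactors hodd hp
    rw [Real.le_log_iff_exp_le (by positivity)]
    linarith [exp_one_lt_d9]

end Nat

theorem stmt_14_general (n : ℕ) (hodd : Odd n)
    (hineq : (n : ℝ) ^ 2 * (1 - ∑ p ∈ n.primeFactors, (1 : ℝ) / (p : ℝ) ^ 2)
      ≤ 4 * (0.621 * (2 * ∑ p ∈ n.primeFactors, Real.log p)
        + 1.216 * (n.primeFactors.card : ℝ) + 2.085)) :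
    n ≤ 3 := by
  by_contra! hgt
  have hpos : (0 : ℝ) < n := by exact_mod_cast hodd.pos
  have hlog : Real.log n < n / 2.7 := (log_le_div_exp_one hpos).trans_lt <|
    div_lt_div_of_pos_left hpos (by norm_num) (lt_trans (by norm_num) exp_one_gt_d9)
  simp only [one_div] at hineq
  obtain hsmall | hlarge : n ≤ 7 ∨ 9 ≤ n := by rcases hodd with ⟨k, rfl⟩; omega
  · have hprime : n.Prime := by
      obtain rfl | rfl : n = 5 ∨ n = 7 := by rcases hodd with ⟨k, rfl⟩; omega
      all_goals norm_num
    have hn5 : (5 : ℝ) ≤ n := by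
      exact_mod_cast hprime.five_le_of_ne_two_of_ne_three (by omega) (by omega)
    rw [hprime.primeFactors, sum_singleton, sum_singleton, card_singleton,
      mul_sub, mul_one, mul_inv_cancel₀ (by positivity)] at hineq
    norm_num at hineq hlog
    nlinarith
  · have hρ := Nat.sum_primeFactors_inv_sq_le hodd (by omega)
    have hL := Nat.sum_log_primeFactors_le_log n
    have hω := Nat.card_primeFactors_le_sum_log hodd
    have hn9 : (9 : ℝ) ≤ n := by exact_mod_cast hlarge
    have hlhs : (n : ℝ) ^ 2 / 2 + n ≤ n ^ 2 * (1 - ∑ p ∈ n.primeFactors, ((p : ℝ) ^ 2)⁻¹) :=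
      calc (n : ℝ) ^ 2 / 2 + n = n ^ 2 * (1 - (2⁻¹ - (n : ℝ)⁻¹)) := by field_simp; ring
        _ ≤ _ := by gcongr
    norm_num at hineq hlog
    nlinarith

theorem stmt_14 (n : ℕ) (hn : 0 < n) (hodd : Odd n)
    (hineq : (n : ℝ) ^ 2 * (1 - ∑ p ∈ n.primeFactors, (1 : ℝ) / (p : ℝ) ^ 2)
      ≤ 4 * (0.621 * (2 * ∑ p ∈ n.primeFactors, Real.log p)
        + 1.216 * (n.primeFactors.card : ℝ) + 2.085)) :
    n ≤ 3 :=
  stmt_14_general n hodd hineq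
end

section
/- Suppose n is an odd positive integer satisfying (1/4)(n+1)² − (n²+1)ρ(n) ≤ 4(0.621·η(n) + 10.596 + 1.216·ω(n)), where ρ(n) = ∑_{p|n} 1/p², η(n) = 2∑_{p|n} log p, and ω(n) is the number of distinct prime divisors. Then n ≤ 21. -/
/-!
For odd `n` every prime factor is at least `3`, so `ρ(n)` is at most the sum of `1/p²` over the odd
primes below `17` plus `∑_{k ≥ 17 odd} 1/k² ≤ 1/32`, which is about `0.217 < 1/4`. Hence the
left-hand side is at least `(1/4 - 0.217) n²`, while `η(n) ≤ 2 log n` and `ω(n) ≤ log₃ n` keep the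
right-hand side below `9.832 · log n + 42.384 ≤ 9.832 · (n/54 + 3) + 42.384`. This settles
`n ≥ 45`; for `23 ≤ n ≤ 43` the actual factorizations give `ρ(n) ≤ 1/9 + 1/121`, which suffices.
-/

open Finset Real

lemma sum_range_one_div_odd_sq_le (m : ℕ) (hm : 0 < m) (N : ℕ) :
    ∑ j ∈ range N, 1 / ((2 * (m + j) + 1 : ℕ) : ℝ) ^ 2
      ≤ 1 / (4 * (m : ℝ)) - 1 / (4 * ((m : ℝ) + N)) := by
  induction N with
  | zero => simp
  | succ N ih =>
    rw [sum_range_succ]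
    have ha : (0 : ℝ) < m + N := by positivity
    -- `1 / (2a + 1)² ≤ 1 / (4a(a + 1)) = 1 / (4a) - 1 / (4(a + 1))` telescopes
    have hterm : 1 / ((2 * (m + N) + 1 : ℕ) : ℝ) ^ 2
        ≤ 1 / (4 * ((m : ℝ) + N)) - 1 / (4 * ((m : ℝ) + (N + 1 : ℕ))) := by
      push_cast
      rw [div_sub_div _ _ (by positivity) (by positivity),
        div_le_div_iff₀ (by positivity) (by positivity)]
      nlinarith
    linarith

lemma sum_one_div_sq_le_of_odd (T : Finset ℕ) (m : ℕ) (hm : 0 < m)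
    (hT : ∀ k ∈ T, Odd k ∧ 2 * m + 1 ≤ k) :
    ∑ k ∈ T, 1 / (k : ℝ) ^ 2 ≤ 1 / (4 * (m : ℝ)) := by
  set N := T.sup id
  have hsub : T ⊆ (range N).image fun j ↦ 2 * (m + j) + 1 := by
    intro k hk
    obtain ⟨⟨r, rfl⟩, hmk⟩ := hT k hk
    have : 2 * r + 1 ≤ N := le_sup (f := id) hk
    exact mem_image.mpr ⟨r - m, mem_range.mpr (by omega), by omega⟩
  have hinj : Set.InjOn (fun j ↦ 2 * (m + j) + 1) (range N) := fun a _ b _ h ↦ by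
    simp only at h; omega
  calc ∑ k ∈ T, 1 / (k : ℝ) ^ 2
      ≤ ∑ k ∈ (range N).image fun j ↦ 2 * (m + j) + 1, 1 / (k : ℝ) ^ 2 :=
        sum_le_sum_of_subset_of_nonneg hsub fun _ _ _ ↦ by positivity
    _ = ∑ j ∈ range N, 1 / ((2 * (m + j) + 1 : ℕ) : ℝ) ^ 2 := sum_image hinj
    _ ≤ 1 / (4 * (m : ℝ)) - 1 / (4 * ((m : ℝ) + N)) := sum_range_one_div_odd_sq_le m hm N
    _ ≤ 1 / (4 * (m : ℝ)) := by
        have : (0 : ℝ) ≤ 1 / (4 * ((m : ℝ) + N)) := by positivity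
        linarith

lemma odd_of_mem_primeFactors {n p : ℕ} (hn : Odd n) (hp : p ∈ n.primeFactors) : Odd p :=
  hn.of_dvd_nat (Nat.dvd_of_mem_primeFactors hp)

lemma sum_primeFactors_one_div_sq_le_of_odd {n : ℕ} (hn : Odd n) :
    ∑ p ∈ n.primeFactors, 1 / (p : ℝ) ^ 2
      ≤ 1 / 9 + 1 / 25 + 1 / 49 + 1 / 121 + 1 / 169 + 1 / 32 := by
  rw [← sum_filter_add_sum_filter_not n.primeFactors (· < 17)]
  have hsmall : ∑ p ∈ n.primeFactors.filter (· < 17), 1 / (p : ℝ) ^ 2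
      ≤ ∑ p ∈ ({3, 5, 7, 11, 13} : Finset ℕ), 1 / (p : ℝ) ^ 2 := by
    refine sum_le_sum_of_subset_of_nonneg (fun p hp ↦ ?_) fun _ _ _ ↦ by positivity
    obtain ⟨hpn, hp17⟩ := mem_filter.mp hp
    have hsmall_primes : ∀ q < 17, q.Prime → Odd q → q ∈ ({3, 5, 7, 11, 13} : Finset ℕ) := by
      decide
    exact hsmall_primes p hp17 (Nat.prime_of_mem_primeFactors hpn) (odd_of_mem_primeFactors hn hpn)
  have hlarge : ∑ p ∈ n.primeFactors.filter (¬ · < 17), 1 / (p : ℝ) ^ 2 ≤ 1 / (4 * ((8 : ℕ) : ℝ)) :=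
    sum_one_div_sq_le_of_odd _ 8 (by norm_num) fun p hp ↦ by
      obtain ⟨hpn, hp17⟩ := mem_filter.mp hp
      exact ⟨odd_of_mem_primeFactors hn hpn, by omega⟩
  norm_num at hsmall hlarge ⊢
  linarith

lemma sum_primeFactors_one_div_sq_le_of_odd_of_lt {n : ℕ} (hn : Odd n) (h23 : 23 ≤ n)
    (h45 : n < 45) : ∑ p ∈ n.primeFactors, 1 / (p : ℝ) ^ 2 ≤ 1 / 9 + 1 / 121 := by
  rw [Nat.odd_iff] at hn
  interval_cases n <;> simp_all [Nat.primeFactors, Nat.primeFactorsList_ofNat] <;> norm_num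

lemma sum_primeFactors_log_le_log {n : ℕ} (hn : n ≠ 0) :
    ∑ p ∈ n.primeFactors, log p ≤ log n := by
  have hpos : ∀ p ∈ n.primeFactors, 0 < p := fun p hp ↦ (Nat.prime_of_mem_primeFactors hp).pos
  rw [← log_prod fun p hp ↦ by have := hpos p hp; positivity, ← Nat.cast_prod]
  exact log_le_log (by exact_mod_cast prod_pos hpos)
    (by exact_mod_cast Nat.le_of_dvd (Nat.pos_of_ne_zero hn) (Nat.prod_primeFactors_dvd n))

lemma pow_card_primeFactors_le {n b : ℕ} (hn : n ≠ 0) (hb : ∀ p ∈ n.primeFactors, b ≤ p) :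
    b ^ n.primeFactors.card ≤ n :=
  calc b ^ n.primeFactors.card = ∏ _p ∈ n.primeFactors, b := (prod_const b).symm
    _ ≤ ∏ p ∈ n.primeFactors, p := prod_le_prod' hb
    _ ≤ n := Nat.le_of_dvd (Nat.pos_of_ne_zero hn) (Nat.prod_primeFactors_dvd n)

lemma card_primeFactors_le_log_of_odd {n : ℕ} (hn : Odd n) :
    (n.primeFactors.card : ℝ) ≤ log n := by
  have h3 : 3 ^ n.primeFactors.card ≤ n := pow_card_primeFactors_le hn.pos.ne' fun p hp ↦ by
    obtain ⟨k, rfl⟩ := odd_of_mem_primeFactors hn hp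
    have := (Nat.prime_of_mem_primeFactors hp).two_le
    omega
  have hlog3 : 1 ≤ log 3 := by
    rw [le_log_iff_exp_le (by norm_num)]
    linarith [exp_one_lt_d9]
  calc (n.primeFactors.card : ℝ) ≤ n.primeFactors.card * log 3 := by
        nlinarith [(Nat.cast_nonneg n.primeFactors.card : (0 : ℝ) ≤ _)]
    _ = log ((3 ^ n.primeFactors.card : ℕ) : ℝ) := by push_cast; rw [log_pow]
    _ ≤ log n := log_le_log (by positivity) (by exact_mod_cast h3)

lemma Real.log_le_div_exp_add {x : ℝ} (hx : 0 < x) (a : ℝ) : log x ≤ x / exp a + a - 1 := by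
  have := log_le_sub_one_of_pos (div_pos hx (exp_pos a))
  rw [log_div hx.ne' (exp_pos a).ne', log_exp] at this
  linarith

lemma log_le_div_add_three {x : ℝ} (hx : 0 < x) : log x ≤ x / 54 + 3 := by
  have h54 : 54 ≤ exp 4 := by
    have : exp 4 = exp 1 ^ 4 := by rw [← exp_nat_mul]; norm_num
    rw [this]
    calc (54 : ℝ) ≤ 2.7182818283 ^ 4 := by norm_num
      _ ≤ exp 1 ^ 4 := pow_le_pow_left₀ (by norm_num) exp_one_gt_d9.le 4
  have := log_le_div_exp_add hx 4
  have : x / exp 4 ≤ x / 54 := div_le_div_of_nonneg_left hx.le (by norm_num) h54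
  linarith

theorem stmt_15_general (n : ℕ) (hodd : Odd n)
    (hineq : ((n : ℝ) + 1) ^ 2 / 4
        - ((n : ℝ) ^ 2 + 1) * ∑ p ∈ n.primeFactors, (1 : ℝ) / (p : ℝ) ^ 2
      ≤ 4 * (0.621 * (2 * ∑ p ∈ n.primeFactors, Real.log p)
        + 10.596 + 1.216 * (n.primeFactors.card : ℝ))) :
    n ≤ 21 := by
  by_contra! h21
  have h23 : 23 ≤ n := by obtain ⟨k, rfl⟩ := hodd; omega
  have hx : (23 : ℝ) ≤ n := by exact_mod_cast h23
  have hlog : log n ≤ n / 54 + 3 := log_le_div_add_three (by linarith)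
  have hη := sum_primeFactors_log_le_log hodd.pos.ne'
  have hω := card_primeFactors_le_log_of_odd hodd
  set ρ := ∑ p ∈ n.primeFactors, 1 / (p : ℝ) ^ 2
  have hbound : ((n : ℝ) + 1) ^ 2 / 4 - ((n : ℝ) ^ 2 + 1) * ρ ≤ 9.832 * (n / 54 + 3) + 42.384 := by
    linarith
  have hn2 : (0 : ℝ) ≤ (n : ℝ) ^ 2 + 1 := by positivity
  rcases lt_or_ge n 45 with h45 | h45
  · have hρ := sum_primeFactors_one_div_sq_le_of_odd_of_lt hodd h23 h45
    nlinarith [mul_le_mul_of_nonneg_left hρ hn2]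
  · have hρ := sum_primeFactors_one_div_sq_le_of_odd hodd
    have hx45 : (45 : ℝ) ≤ n := by exact_mod_cast h45
    nlinarith [mul_le_mul_of_nonneg_left hρ hn2]

theorem stmt_15 (n : ℕ) (hn : 0 < n) (hodd : Odd n)
    (hineq : ((n : ℝ) + 1) ^ 2 / 4
        - ((n : ℝ) ^ 2 + 1) * ∑ p ∈ n.primeFactors, (1 : ℝ) / (p : ℝ) ^ 2
      ≤ 4 * (0.621 * (2 * ∑ p ∈ n.primeFactors, Real.log p)
        + 10.596 + 1.216 * (n.primeFactors.card : ℝ))) :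
    n ≤ 21 :=
  stmt_15_general n hodd hineq
end
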